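/- Let Ω ⊆ ℝ^d, let A_cl : ℝ^d → ℝ^{d×d} be continuously differentiable, and for y ∈ ℝ^d let N(y) ∈ ℝ^{d×d} denote the matrix whose j-th column is (∂A_cl/∂y_j)(y) · y. Assume that for every y ∈ Ω, sup_{z≠0} ⟨A_cl(y)z, z⟩/‖z‖² + sup_{z≠0} ⟨N(y)z, z⟩/‖z‖² < 0 (i.e. logm(A_cl(y)) + logm(N(y)) < 0). Let y : [0,∞) → Ω be a differentiable solution of y'(t) = A_cl(y(t)) y(t). Then the function t ↦ ‖A_cl(y(t)) y(t)‖ is nonincreasing on [0,∞). -/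

import Mathlib

/-!
Along the solution, `w = A_cl(y) y` is the velocity `y'`, so differentiating `A_cl(y) y` by the
product rule gives `w' = N(y) w + A_cl(y) w`. Hence `d/dt ‖w‖² = 2⟪(N(y) + A_cl(y)) w, w⟫
≤ 2 (logm N(y) + logm A_cl(y)) ‖w‖² ≤ 0`, and `‖w‖` is nonincreasing by the mean value theorem.
-/

open scoped RealInnerProductSpace

/-- Action of a matrix on Euclidean space. -/
noncomputable def mulVecE {d : ℕ} (M : Matrix (Fin d) (Fin d) ℝ)
    (x : EuclideanSpace ℝ (Fin d)) : EuclideanSpace ℝ (Fin d) :=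
  Matrix.toEuclideanCLM (𝕜 := ℝ) M x

/-- Given the (entrywise) derivative data `Acl'` of a matrix-valued map `Acl`, the matrix
`N(y) = (∇A_cl(y)) y` whose `j`-th column is `[∂A_cl(y)/∂y_j] y`; entrywise
`N(y) i j = ∑ k (∂A_cl_{ik}/∂y_j)(y) · y_k`. -/
noncomputable def gradMat {d : ℕ}
    (Acl' : EuclideanSpace ℝ (Fin d) → Fin d → Fin d → (EuclideanSpace ℝ (Fin d) →L[ℝ] ℝ))
    (y : EuclideanSpace ℝ (Fin d)) : Matrix (Fin d) (Fin d) ℝ :=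
  Matrix.of fun i j => ∑ k, Acl' y i k (EuclideanSpace.single j 1) * y k

theorem EuclideanSpace.hasDerivAt_of_forall_apply {ι : Type*} [Fintype ι]
    {f : ℝ → EuclideanSpace ℝ ι} {f' : EuclideanSpace ℝ ι} {t : ℝ}
    (hf : ∀ i, HasDerivAt (fun s => f s i) (f' i) t) : HasDerivAt f f' t :=
  (PiLp.hasFDerivAt_toLp 2 _).comp_hasDerivAt (f := fun s i => f s i) t (hasDerivAt_pi.2 hf)

theorem HasDerivAt.euclideanSpace_apply {ι : Type*} [Fintype ι]
    {f : ℝ → EuclideanSpace ℝ ι} {f' : EuclideanSpace ℝ ι} {t : ℝ}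
    (hf : HasDerivAt f f' t) (i : ι) : HasDerivAt (fun s => f s i) (f' i) t :=
  (PiLp.hasFDerivAt_apply 2 (f t) i).comp_hasDerivAt t hf

theorem EuclideanSpace.clm_apply_eq_sum {ι : Type*} [Fintype ι] [DecidableEq ι]
    (L : EuclideanSpace ℝ ι →L[ℝ] ℝ) (v : EuclideanSpace ℝ ι) :
    L v = ∑ j, v j * L (EuclideanSpace.single j 1) := by
  conv_lhs => rw [← (EuclideanSpace.basisFun ι ℝ).toBasis.sum_repr v]
  simp [map_sum, EuclideanSpace.basisFun_apply]

theorem mulVecE_apply {d : ℕ} (M : Matrix (Fin d) (Fin d) ℝ) (x : EuclideanSpace ℝ (Fin d))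
    (i : Fin d) : mulVecE M x i = ∑ k, M i k * x k :=
  rfl

theorem mulVecE_gradMat_apply {d : ℕ}
    (Acl' : EuclideanSpace ℝ (Fin d) → Fin d → Fin d → (EuclideanSpace ℝ (Fin d) →L[ℝ] ℝ))
    (x v : EuclideanSpace ℝ (Fin d)) (i : Fin d) :
    mulVecE (gradMat Acl' x) v i = ∑ k, Acl' x i k v * x k := by
  simp only [mulVecE_apply, gradMat, Matrix.of_apply,
    EuclideanSpace.clm_apply_eq_sum (Acl' x i _) v, Finset.sum_mul]
  rw [Finset.sum_comm]
  exact Finset.sum_congr rfl fun _ _ => Finset.sum_congr rfl fun _ _ => by ring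

theorem HasDerivAt.mulVecE_comp {d : ℕ} {A : EuclideanSpace ℝ (Fin d) → Matrix (Fin d) (Fin d) ℝ}
    {A' : EuclideanSpace ℝ (Fin d) → Fin d → Fin d → (EuclideanSpace ℝ (Fin d) →L[ℝ] ℝ)}
    {y : ℝ → EuclideanSpace ℝ (Fin d)} {y' : EuclideanSpace ℝ (Fin d)} {t : ℝ}
    (hA : ∀ i k, HasFDerivAt (fun z => A z i k) (A' (y t) i k) (y t)) (hy : HasDerivAt y y' t) :
    HasDerivAt (fun s => mulVecE (A (y s)) (y s))
      (mulVecE (gradMat A' (y t)) y' + mulVecE (A (y t)) y') t := by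
  refine EuclideanSpace.hasDerivAt_of_forall_apply fun i => ?_
  rw [PiLp.add_apply, mulVecE_gradMat_apply]
  simp only [mulVecE_apply, ← Finset.sum_add_distrib]
  exact HasDerivAt.fun_sum fun k _ =>
    ((hA i k).comp_hasDerivAt t hy).mul (hy.euclideanSpace_apply k)

theorem antitoneOn_norm_of_inner_deriv_nonpos {E : Type*} [NormedAddCommGroup E]
    [InnerProductSpace ℝ E] {w w' : ℝ → E} {D : Set ℝ} (hD : Convex ℝ D)
    (hw : ∀ t ∈ D, HasDerivAt w (w' t) t) (hinner : ∀ t ∈ interior D, ⟪w' t, w t⟫ ≤ 0) :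
    AntitoneOn (fun t => ‖w t‖) D := by
  have hsq : AntitoneOn (fun t => ‖w t‖ ^ 2) D :=
    antitoneOn_of_hasDerivWithinAt_nonpos hD
      (fun t ht => (hw t ht).norm_sq.continuousAt.continuousWithinAt)
      (fun t ht => (hw t (interior_subset ht)).norm_sq.hasDerivWithinAt)
      (fun t ht => by rw [real_inner_comm]; nlinarith [hinner t ht])
  exact fun s hs t ht hst => (pow_le_pow_iff_left₀ (norm_nonneg _) (norm_nonneg _) two_ne_zero).1
    (hsq hs ht hst)

theorem closed_loop_norm_antitone_general {d : ℕ} (Ω : Set (EuclideanSpace ℝ (Fin d)))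
    (Acl : EuclideanSpace ℝ (Fin d) → Matrix (Fin d) (Fin d) ℝ)
    (Acl' : EuclideanSpace ℝ (Fin d) → Fin d → Fin d → (EuclideanSpace ℝ (Fin d) →L[ℝ] ℝ))
    (hderiv : ∀ (i k : Fin d) (x : EuclideanSpace ℝ (Fin d)),
      HasFDerivAt (fun z => Acl z i k) (Acl' x i k) x)
    (hlogm : ∀ y ∈ Ω, ∃ a b : ℝ, a + b < 0 ∧
      (∀ z : EuclideanSpace ℝ (Fin d), ⟪mulVecE (Acl y) z, z⟫ ≤ a * ‖z‖ ^ 2) ∧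
      (∀ z : EuclideanSpace ℝ (Fin d), ⟪mulVecE (gradMat Acl' y) z, z⟫ ≤ b * ‖z‖ ^ 2))
    (y : ℝ → EuclideanSpace ℝ (Fin d))
    (hmem : ∀ t : ℝ, 0 ≤ t → y t ∈ Ω)
    (hode : ∀ t : ℝ, 0 ≤ t → HasDerivAt y (mulVecE (Acl (y t)) (y t)) t) :
    AntitoneOn (fun t => ‖mulVecE (Acl (y t)) (y t)‖) (Set.Ici (0 : ℝ)) := by
  refine antitoneOn_norm_of_inner_deriv_nonpos (convex_Ici 0)
    (fun t ht => (hode t ht).mulVecE_comp fun i k => hderiv i k (y t)) fun t ht => ?_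
  set w := mulVecE (Acl (y t)) (y t)
  obtain ⟨a, b, hab, hA, hN⟩ := hlogm (y t) (hmem t (interior_subset ht))
  rw [inner_add_left]
  nlinarith [hA w, hN w, sq_nonneg ‖w‖]

/-- If `A_cl` is continuously differentiable and
`logm(A_cl(y)) + logm((∇A_cl(y)) y) < 0` on `Ω`, then along any solution of
`y' = A_cl(y) y` staying in `Ω`, the function `t ↦ ‖A_cl(y(t)) y(t)‖` is nonincreasing
on `[0, ∞)`. -/
theorem closed_loop_norm_antitone {d : ℕ} (Ω : Set (EuclideanSpace ℝ (Fin d)))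
    (Acl : EuclideanSpace ℝ (Fin d) → Matrix (Fin d) (Fin d) ℝ)
    (Acl' : EuclideanSpace ℝ (Fin d) → Fin d → Fin d → (EuclideanSpace ℝ (Fin d) →L[ℝ] ℝ))
    (hderiv : ∀ (i k : Fin d) (x : EuclideanSpace ℝ (Fin d)),
      HasFDerivAt (fun z => Acl z i k) (Acl' x i k) x)
    (hcont : ∀ i k : Fin d, Continuous fun x => Acl' x i k)
    (hlogm : ∀ y ∈ Ω, ∃ a b : ℝ, a + b < 0 ∧
      (∀ z : EuclideanSpace ℝ (Fin d), ⟪mulVecE (Acl y) z, z⟫ ≤ a * ‖z‖ ^ 2) ∧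
      (∀ z : EuclideanSpace ℝ (Fin d), ⟪mulVecE (gradMat Acl' y) z, z⟫ ≤ b * ‖z‖ ^ 2))
    (y : ℝ → EuclideanSpace ℝ (Fin d))
    (hmem : ∀ t : ℝ, 0 ≤ t → y t ∈ Ω)
    (hode : ∀ t : ℝ, 0 ≤ t → HasDerivAt y (mulVecE (Acl (y t)) (y t)) t) :
    AntitoneOn (fun t => ‖mulVecE (Acl (y t)) (y t)‖) (Set.Ici (0 : ℝ)) :=
  closed_loop_norm_antitone_general Ω Acl Acl' hderiv hlogm y hmem hode
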